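/- arXiv:2401.12386 — 5 statements merged into one kernel-verified Lean document; each statement's English description precedes it below -/
import Mathlib

section
/- The Levi-Civita coordinate change γ_i is canonical (symplectic) away from the origin in position: the map (u,v,p_u,p_v) ↦ (x,y,p_x,p_y) given by x = u^2 - v^2 + x_i, y = 2uv, p_x = (u p_u - v p_v)/(2(u^2+v^2)), p_y = (v p_u + u p_v)/(2(u^2+v^2)) satisfies Dγ_i(w)^T J Dγ_i(w) = J at every point w = (u,v,p_u,p_v) with (u,v) ≠ (0,0), where J is the standard 4×4 symplectic matrix. -/
/-!
With `z = u + i v` and `P = p_u + i p_v`, the map is `(z, P) ↦ (z² + x_i, P / (2 z̄))`, the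
cotangent lift of `z ↦ z² + x_i`, which preserves the Liouville form `p dq` and hence `ω`.
Concretely, the Jacobian is explicit away from `u = v = 0`, and `ω(Dγ a, Dγ b) = ω(a, b)` is a
rational identity whose denominators are powers of `u² + v²`.
-/

open scoped BigOperators

/-- The Levi-Civita coordinate change `γᵢ` on `ℝ⁴` (coordinates `u, v, p_u, p_v`). -/
noncomputable def leviCivita (xi : ℝ) (w : Fin 4 → ℝ) : Fin 4 → ℝ :=
  ![w 0 ^ 2 - w 1 ^ 2 + xi,
    2 * w 0 * w 1,
    (w 0 * w 2 - w 1 * w 3) / (2 * (w 0 ^ 2 + w 1 ^ 2)),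
    (w 1 * w 2 + w 0 * w 3) / (2 * (w 0 ^ 2 + w 1 ^ 2))]

/-- The standard symplectic matrix `J = [[0, I₂], [-I₂, 0]]`, as a map on `ℝ⁴`. -/
def Jmap (a : Fin 4 → ℝ) : Fin 4 → ℝ := ![a 2, a 3, -a 0, -a 1]

/-- The standard symplectic form `ω(a,b) = ⟨a, J b⟩` on `ℝ⁴`. -/
def symplForm (a b : Fin 4 → ℝ) : ℝ := ∑ i, a i * Jmap b i

theorem HasFDerivAt.div {𝕜 E : Type*} [NontriviallyNormedField 𝕜] [NormedAddCommGroup E]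
    [NormedSpace 𝕜 E] {c d : E → 𝕜} {c' d' : E →L[𝕜] 𝕜} {x : E}
    (hc : HasFDerivAt c c' x) (hd : HasFDerivAt d d' x) (hx : d x ≠ 0) :
    HasFDerivAt (fun y => c y / d y) ((d x ^ 2)⁻¹ • (d x • c' - c x • d')) x := by
  simp only [div_eq_mul_inv]
  refine (hc.mul ((hasDerivAt_inv hx).comp_hasFDerivAt x hd)).congr_fderiv ?_
  ext v
  simp only [Function.comp_apply, add_apply, smul_apply, sub_apply, smul_eq_mul, neg_mul, mul_neg]
  field_simp
  ring

open Matrix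

noncomputable def leviCivitaJacobian (w : Fin 4 → ℝ) : Matrix (Fin 4) (Fin 4) ℝ :=
  let r := w 0 ^ 2 + w 1 ^ 2
  !![2 * w 0, -2 * w 1, 0, 0;
     2 * w 1, 2 * w 0, 0, 0;
     w 2 / (2 * r) - w 0 * (w 0 * w 2 - w 1 * w 3) / r ^ 2,
       -w 3 / (2 * r) - w 1 * (w 0 * w 2 - w 1 * w 3) / r ^ 2, w 0 / (2 * r), -w 1 / (2 * r);
     w 3 / (2 * r) - w 0 * (w 1 * w 2 + w 0 * w 3) / r ^ 2,
       w 2 / (2 * r) - w 1 * (w 1 * w 2 + w 0 * w 3) / r ^ 2, w 1 / (2 * r), w 0 / (2 * r)]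

theorem hasFDerivAt_leviCivita (xi : ℝ) {w : Fin 4 → ℝ} (hw : w 0 ^ 2 + w 1 ^ 2 ≠ 0) :
    HasFDerivAt (leviCivita xi) (toLin' (leviCivitaJacobian w)).toContinuousLinearMap w := by
  have hu := hasFDerivAt_apply (𝕜 := ℝ) 0 w
  have hv := hasFDerivAt_apply (𝕜 := ℝ) 1 w
  have hpu := hasFDerivAt_apply (𝕜 := ℝ) 2 w
  have hpv := hasFDerivAt_apply (𝕜 := ℝ) 3 w
  have hden := ((hu.pow 2).add (hv.pow 2)).const_mul (2 : ℝ)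
  have hden_ne : 2 * (w 0 ^ 2 + w 1 ^ 2) ≠ 0 := mul_ne_zero two_ne_zero hw
  refine hasFDerivAt_pi'.2 fun i => ?_
  fin_cases i
  · refine (((hu.pow 2).sub (hv.pow 2)).add_const xi).congr_fderiv ?_
    ext a; simp [leviCivitaJacobian, dotProduct, Fin.sum_univ_four]; ring
  · refine ((hu.const_mul (2 : ℝ)).mul hv).congr_fderiv ?_
    ext a; simp [leviCivitaJacobian, dotProduct, Fin.sum_univ_four]; ring
  · refine (((hu.mul hpu).sub (hv.mul hpv)).div hden hden_ne).congr_fderiv ?_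
    ext a; simp [leviCivitaJacobian, dotProduct, Fin.sum_univ_four]; field_simp; ring
  · refine (((hv.mul hpu).add (hu.mul hpv)).div hden hden_ne).congr_fderiv ?_
    ext a; simp [leviCivitaJacobian, dotProduct, Fin.sum_univ_four]; field_simp; ring

theorem symplForm_leviCivitaJacobian_mulVec {w : Fin 4 → ℝ} (hw : w 0 ^ 2 + w 1 ^ 2 ≠ 0)
    (a b : Fin 4 → ℝ) :
    symplForm (leviCivitaJacobian w *ᵥ a) (leviCivitaJacobian w *ᵥ b) = symplForm a b := by
  simp [symplForm, Jmap, leviCivitaJacobian, mulVec, dotProduct, Fin.sum_univ_four]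
  field_simp
  ring

/-- the Levi-Civita coordinate change is canonical:
`Dγᵢ(w)ᵀ J Dγᵢ(w) = J` at every point with `(u,v) ≠ (0,0)`, i.e. the derivative
preserves the standard symplectic form. -/
theorem leviCivita_symplectic (xi : ℝ) (w : Fin 4 → ℝ)
    (hw : (w 0, w 1) ≠ (0, 0)) :
    ∀ a b : Fin 4 → ℝ,
      symplForm (fderiv ℝ (leviCivita xi) w a) (fderiv ℝ (leviCivita xi) w b) =
        symplForm a b := by
  have hr : w 0 ^ 2 + w 1 ^ 2 ≠ 0 := by
    contrapose! hw
    obtain ⟨hu, hv⟩ := (add_eq_zero_iff_of_nonneg (sq_nonneg _) (sq_nonneg _)).1 hw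
    simp_all
  intro a b
  rw [(hasFDerivAt_leviCivita xi hr).fderiv]
  exact symplForm_leviCivitaJacobian_mulVec hr a b
end

section
/- If N ⇒^f M is a covering relation between h-sets in the plane, and the rigorous-verification conditions π_2(f_c(N_c)) ⊂ (-1,1), π_1(f_c({-1}×[-1,1])) < -1, and π_1(f_c({1}×[-1,1])) > 1 hold for a continuous map f_c: [-1,1]^2 → ℝ^2, then f_c satisfies the covering relation N_c ⇒ M_c; i.e., there exists a homotopy h: [0,1]×N_c → ℝ^2 with h_0 = f_c, h([0,1], ∂[-1,1]×[-1,1]) ∩ [-1,1]^2 = ∅, h([0,1], N_c) ∩ ([-1,1]×{-1,1}) = ∅, and h_1(p,q) = (ap, 0) for some a > 1. -/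
/-!
The straight-line homotopy from `f_c` to `(p, q) ↦ (2p, 0)` works. Each of the three inequalities
says that one coordinate of `f_c` lies in a convex subset of `ℝ` (the half-line `(-∞, -1)`, the
half-line `(1, ∞)`, the interval `(-1, 1)`) which also contains the same coordinate of the linear
endpoint, so that coordinate stays in it along the whole homotopy.
-/

open Set

/-- The model square `N_c = [-1,1]²`. -/
def Ncsq : Set (ℝ × ℝ) := Icc (-1, -1) (1, 1)

/-- The exit set `N_c⁻ = {-1,1} × [-1,1]`. -/
def NcExit : Set (ℝ × ℝ) := {z ∈ Ncsq | z.1 = -1 ∨ z.1 = 1}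

/-- The entry set `M_c⁺ = [-1,1] × {-1,1}`. -/
def NcEntry : Set (ℝ × ℝ) := {z ∈ Ncsq | z.2 = -1 ∨ z.2 = 1}

open AffineMap

theorem ContinuousOn.lineMap_homotopy {α E : Type*} [TopologicalSpace α] [NormedAddCommGroup E]
    [NormedSpace ℝ E] {f g : α → E} {s : Set α} (hf : ContinuousOn f s) (hg : ContinuousOn g s)
    (T : Set ℝ) :
    ContinuousOn (fun q : ℝ × α => AffineMap.lineMap (f q.2) (g q.2) q.1) (T ×ˢ s) :=
  (hf.comp continuousOn_snd fun _ hq => hq.2).lineMap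
    (hg.comp continuousOn_snd fun _ hq => hq.2) continuousOn_fst

theorem notMem_Ncsq_of_fst_lt_neg_one {p : ℝ × ℝ} (hp : p.1 < -1) : p ∉ Ncsq :=
  fun h => hp.not_ge h.1.1

theorem notMem_Ncsq_of_one_lt_fst {p : ℝ × ℝ} (hp : 1 < p.1) : p ∉ Ncsq :=
  fun h => hp.not_ge h.2.1

theorem notMem_NcEntry_of_snd_mem_Ioo {p : ℝ × ℝ} (hp : p.2 ∈ Ioo (-1) 1) : p ∉ NcEntry := by
  rintro ⟨-, h | h⟩ <;> simp [h] at hp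

/-- if a continuous map `f_c` satisfies the contraction condition
`π₂(f_c(N_c)) ⊂ (-1,1)`, the left expansion condition `π₁(f_c({-1}×[-1,1])) < -1`,
and the right expansion condition `π₁(f_c({1}×[-1,1])) > 1`, then `f_c` realizes a
covering relation: there is a homotopy `h` with `h₀ = f_c`,
`h([0,1], N_c⁻) ∩ N_c = ∅`, `h([0,1], N_c) ∩ M_c⁺ = ∅`, and `h₁(p,q) = (ap, 0)`
for some `a > 1`. -/
theorem covering_from_inequalities (fc : ℝ × ℝ → ℝ × ℝ)
    (hcont : ContinuousOn fc Ncsq)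
    (hcontr : ∀ z ∈ Ncsq, (fc z).2 ∈ Ioo (-1 : ℝ) 1)
    (hleft : ∀ z ∈ Ncsq, z.1 = -1 → (fc z).1 < -1)
    (hright : ∀ z ∈ Ncsq, z.1 = 1 → (fc z).1 > 1) :
    ∃ (h : ℝ → ℝ × ℝ → ℝ × ℝ) (a : ℝ), 1 < a ∧
      ContinuousOn (fun q : ℝ × (ℝ × ℝ) => h q.1 q.2) (Icc (0 : ℝ) 1 ×ˢ Ncsq) ∧
      (∀ z ∈ Ncsq, h 0 z = fc z) ∧
      (∀ t ∈ Icc (0 : ℝ) 1, ∀ z ∈ NcExit, h t z ∉ Ncsq) ∧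
      (∀ t ∈ Icc (0 : ℝ) 1, ∀ z ∈ Ncsq, h t z ∉ NcEntry) ∧
      (∀ z ∈ Ncsq, h 1 z = (a * z.1, 0)) := by
  have hlin : ContinuousOn (fun z : ℝ × ℝ => (2 * z.1, (0 : ℝ))) Ncsq := by fun_prop
  refine ⟨fun t z => lineMap (fc z) (2 * z.1, 0) t, 2, one_lt_two,
    hcont.lineMap_homotopy hlin _, fun z _ => lineMap_apply_zero _ _, ?_, ?_,
    fun z _ => lineMap_apply_one _ _⟩
  · rintro t ht z ⟨hz, hz1 | hz1⟩
    · refine notMem_Ncsq_of_fst_lt_neg_one ?_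
      rw [fst_lineMap]
      exact (convex_Iio _).lineMap_mem (mem_Iio.2 (hleft z hz hz1)) (by norm_num [hz1]) ht
    · refine notMem_Ncsq_of_one_lt_fst ?_
      rw [fst_lineMap]
      exact (convex_Ioi _).lineMap_mem (mem_Ioi.2 (hright z hz hz1)) (by norm_num [hz1]) ht
  · intro t ht z hz
    refine notMem_NcEntry_of_snd_mem_Ioo ?_
    rw [snd_lineMap]
    exact (convex_Ioo _ _).lineMap_mem (hcontr z hz) (by norm_num) ht
end

section
/- Symmetry of Poincaré covering relations: assume the Hamiltonian system is S-symmetric (Γ∘S = Γ, ∇Γ∘S = -S∘∇Γ, and the flow satisfies S(Φ_s(w)) = Φ_{-s}(S(w))). Let N_1, N_2 be h-sets on sections Σ_1, Σ_2 with parametrizations ψ_1, ψ_2, and let P: Σ_1 → Σ_2 and P^S: SΣ_2 → SΣ_1 be Poincaré maps with S∘P = (P^S)^{-1}∘S. If N_1 P-covers N_2 in local coordinates (N_1 ⇒^{P_{21}} N_2 with P_{21} = ψ_2^{-1}∘P∘ψ_1), then SN_2 P^S-backcovers SN_1, i.e. N_1 ⇒^{(P^S_{12})^{-1}} N_2 where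 P^S_{12} = (Sψ_1)^{-1}∘P^S∘(Sψ_2). Concretely: under the hypothesis S∘P = (P^S)^{-1}∘S, the map (P^S_{12})^{-1} equals P_{21}, so the backcovering follows from the covering. -/
open Set

/-- Covering relation in local coordinates: the map `fc : [-1,1]² → ℝ²` admits a
homotopy as in the Gidea–Zgliczyński definition. -/
def CoversLocal (fc : ℝ × ℝ → ℝ × ℝ) : Prop :=
  ∃ (h : ℝ → ℝ × ℝ → ℝ × ℝ) (a : ℝ), 1 < a ∧
    ContinuousOn (fun q : ℝ × (ℝ × ℝ) => h q.1 q.2) (Icc (0 : ℝ) 1 ×ˢ Ncsq) ∧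
    (∀ z ∈ Ncsq, h 0 z = fc z) ∧
    (∀ t ∈ Icc (0 : ℝ) 1, ∀ z ∈ NcExit, h t z ∉ Ncsq) ∧
    (∀ t ∈ Icc (0 : ℝ) 1, ∀ z ∈ Ncsq, h t z ∉ NcEntry) ∧
    (∀ z ∈ Ncsq, h 1 z = (a * z.1, 0))

open Function

theorem Equiv.symm_apply_apply_of_semiconj {α β : Type*} (e : α ≃ β) {f : α → α} {g : β → β}
    (h : Semiconj e f g) (x : α) : e.symm (g (e x)) = f x := by
  rw [← h, e.symm_apply_apply]

theorem CoversLocal.congr {f g : ℝ × ℝ → ℝ × ℝ} (hf : CoversLocal f)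
    (hfg : ∀ z ∈ Ncsq, f z = g z) : CoversLocal g := by
  obtain ⟨h, a, ha, hcont, h_start, h_exit, h_entry, h_end⟩ := hf
  exact ⟨h, a, ha, hcont, fun z hz => (h_start z hz).trans (hfg z hz), h_exit, h_entry, h_end⟩

theorem symmetry_backcovering_general {α : Type*}
    (S : α ≃ α)
    (P PSinv : α → α)
    (hsym : ∀ w, S (P w) = PSinv (S w))
    (ψ₁ : ℝ × ℝ → α) (ψ₂inv : α → ℝ × ℝ)
    (hcov : CoversLocal (fun z => ψ₂inv (P (ψ₁ z)))) :
    (∀ z, ψ₂inv (S.symm (PSinv (S (ψ₁ z)))) = ψ₂inv (P (ψ₁ z))) ∧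
      CoversLocal (fun z => ψ₂inv (S.symm (PSinv (S (ψ₁ z))))) := by
  have hconj (z : ℝ × ℝ) : ψ₂inv (S.symm (PSinv (S (ψ₁ z)))) = ψ₂inv (P (ψ₁ z)) :=
    congrArg ψ₂inv (S.symm_apply_apply_of_semiconj hsym (ψ₁ z))
  exact ⟨hconj, hcov.congr fun z _ => (hconj z).symm⟩

/-- symmetry of Poincaré covering relations. With `S` an involution,
`P : Σ₁ → Σ₂` and `P^S : SΣ₂ → SΣ₁` Poincaré maps satisfying `S∘P = (P^S)⁻¹∘S`
(here `PSinv` denotes `(P^S)⁻¹`), and `ψ₁, ψ₂` parametrizations of the sections with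
left inverses `ψ₁inv, ψ₂inv`, the local map `(P^S₁₂)⁻¹ = ψ₂⁻¹∘S⁻¹∘(P^S)⁻¹∘S∘ψ₁`
coincides with `P₂₁ = ψ₂⁻¹∘P∘ψ₁`; hence if `N₁ ⇒^{P₂₁} N₂` then the covering
`N₁ ⇒^{(P^S₁₂)⁻¹} N₂` (i.e. the backcovering `SN₂ ⇐^{P^S} SN₁`) holds. -/
theorem symmetry_backcovering {α : Type*}
    (S : α ≃ α) (hS : ∀ w, S (S w) = w)
    (P PSinv : α → α)
    (hsym : ∀ w, S (P w) = PSinv (S w))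
    (ψ₁ ψ₂ : ℝ × ℝ → α) (ψ₁inv ψ₂inv : α → ℝ × ℝ)
    (hψ₁ : ∀ z, ψ₁inv (ψ₁ z) = z) (hψ₂ : ∀ z, ψ₂inv (ψ₂ z) = z)
    (hψ₂P : ∀ z, ψ₂ (ψ₂inv (P (ψ₁ z))) = P (ψ₁ z))
    (hcov : CoversLocal (fun z => ψ₂inv (P (ψ₁ z)))) :
    (∀ z, ψ₂inv (S.symm (PSinv (S (ψ₁ z)))) = ψ₂inv (P (ψ₁ z))) ∧
      CoversLocal (fun z => ψ₂inv (S.symm (PSinv (S (ψ₁ z))))) :=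
  symmetry_backcovering_general S P PSinv hsym ψ₁ ψ₂inv hcov
end

section
/- Covering relations near a planar hyperbolic fixed point (Lemma on rectangles): let f = (f_1,f_2): [-1,1]^2 → ℝ^2 be C^1 with f(0) = 0, and suppose there exist positive reals α, β, ρ, c with ρ > β and α > 2c + ρ such that for all z ∈ [-1,1]^2: ∂f_1/∂z_1(z) > α, ∂f_1/∂z_2(z) ∈ (-c, 0), ∂f_2/∂z_1(z) ∈ (0, c), ∂f_2/∂z_2(z) ∈ (β, ρ). Then for any 0 < a < b < 1, setting a' = aβ and b' = (c+ρ)b, the rectangle R_{a,b} = [0,b]×[a,b] f-covers both R_{a',b'} = [0,b']×[a',b'] and Q_{a',b'} = [a',b']×[a',b']; concretely: (i) π_2 f(R_{a,b}) ⊂ (a', b'), (ii) π_1 f({0}×[a,b]) < 0 < a', and (iii) π_1 f({b}×[a,b]) > b'. -/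
/-!
Each conclusion bounds a linear functional `L` of `f z = f z - f 0` for some `z` in the rectangle
`[0,b] × [a,b] ⊆ [-1,1]²`. By the mean value theorem along the segment `[0, z]`, it suffices to
prove the same bound for `L (Df(w) z)` at every `w ∈ [-1,1]²`, and writing
`Df(w) z = z₁ ∂₁f(w) + z₂ ∂₂f(w)` this follows from the sign conditions on the partial
derivatives; for the right edge, `y ∂₂f₁ > -cb` and `α > 2c + ρ` leave `f₁ > (c + ρ) b`.
-/

open Set

/-- The square `[-1,1]² ⊂ ℝ²`. -/
def sq2 : Set (ℝ × ℝ) := Icc (-1, -1) (1, 1)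

section MeanValue

variable {E F : Type*} [NormedAddCommGroup E] [NormedSpace ℝ E]
  [NormedAddCommGroup F] [NormedSpace ℝ F] {f : E → F} {s : Set E} {x y : E}

theorem lt_apply_sub_of_lt_apply_fderivWithin (hf : DifferentiableOn ℝ f s)
    (hs : segment ℝ x y ⊆ s) (L : F →L[ℝ] ℝ) {m : ℝ}
    (hm : ∀ w ∈ segment ℝ x y, m < L (fderivWithin ℝ f s w (y - x))) :
    m < L (f y - f x) := by
  let g : ℝ → ℝ := fun t => L (f (AffineMap.lineMap x y t))
  have hpath : MapsTo (AffineMap.lineMap x y) (Icc (0 : ℝ) 1) s :=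
    fun t ht => hs (lineMap_mem_segment ℝ x y ht)
  have hg : ∀ t ∈ Icc (0 : ℝ) 1,
      HasDerivWithinAt g (L (fderivWithin ℝ f s (AffineMap.lineMap x y t) (y - x)))
        (Icc 0 1) t := fun t ht =>
    L.hasFDerivAt.comp_hasDerivWithinAt t <|
      (hf _ (hpath ht)).hasFDerivWithinAt.comp_hasDerivWithinAt t
        AffineMap.hasDerivWithinAt_lineMap hpath
  obtain ⟨t, ht, hslope⟩ := exists_hasDerivAt_eq_slope g _ zero_lt_one
    (fun t ht => (hg t ht).continuousWithinAt)
    (fun t ht => (hg t (Ioo_subset_Icc_self ht)).hasDerivAt (Icc_mem_nhds ht.1 ht.2))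
  have hends : g 1 - g 0 = L (f y - f x) := by simp [g, map_sub]
  rw [sub_zero, div_one, hends] at hslope
  rw [← hslope]
  exact hm _ (lineMap_mem_segment ℝ x y (Ioo_subset_Icc_self ht))

theorem apply_sub_lt_of_apply_fderivWithin_lt (hf : DifferentiableOn ℝ f s)
    (hs : segment ℝ x y ⊆ s) (L : F →L[ℝ] ℝ) {M : ℝ}
    (hM : ∀ w ∈ segment ℝ x y, L (fderivWithin ℝ f s w (y - x)) < M) :
    L (f y - f x) < M :=
  neg_lt_neg_iff.mp <| lt_apply_sub_of_lt_apply_fderivWithin hf hs (-L) (m := -M)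
    fun w hw => neg_lt_neg (hM w hw)

theorem lt_apply_of_lt_apply_fderivWithin (hf : DifferentiableOn ℝ f s)
    (hs : segment ℝ 0 y ⊆ s) (hf0 : f 0 = 0) (L : F →L[ℝ] ℝ) {m : ℝ}
    (hm : ∀ w ∈ s, m < L (fderivWithin ℝ f s w y)) :
    m < L (f y) := by
  simpa [hf0] using lt_apply_sub_of_lt_apply_fderivWithin hf hs L
    fun w hw => by simpa using hm w (hs hw)

theorem apply_lt_of_apply_fderivWithin_lt (hf : DifferentiableOn ℝ f s)
    (hs : segment ℝ 0 y ⊆ s) (hf0 : f 0 = 0) (L : F →L[ℝ] ℝ) {M : ℝ}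
    (hM : ∀ w ∈ s, L (fderivWithin ℝ f s w y) < M) :
    L (f y) < M := by
  simpa [hf0] using apply_sub_lt_of_apply_fderivWithin_lt hf hs L
    fun w hw => by simpa using hM w (hs hw)

end MeanValue

theorem ContinuousLinearMap.apply_eq_fst_smul_add_snd_smul {F : Type*} [NormedAddCommGroup F]
    [NormedSpace ℝ F] (D : ℝ × ℝ →L[ℝ] F) (z : ℝ × ℝ) :
    D z = z.1 • D (1, 0) + z.2 • D (0, 1) := by
  rw [← map_smul, ← map_smul, ← map_add]
  congr 1
  ext <;> simp

section PlanarJacobian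

variable (D : ℝ × ℝ →L[ℝ] ℝ × ℝ) {a b c α β ρ y : ℝ}

theorem snd_apply_mem_Ioo_of_mem_Icc (ha : 0 < a) (hβ : 0 < β)
    (h21 : (D (1, 0)).2 ∈ Ioo 0 c) (h22 : (D (0, 1)).2 ∈ Ioo β ρ) {z : ℝ × ℝ}
    (hz : z ∈ Icc ((0 : ℝ), a) (b, b)) : (D z).2 ∈ Ioo (a * β) ((c + ρ) * b) := by
  obtain ⟨⟨hz1, hz2⟩, hz1', hz2'⟩ : (0 ≤ z.1 ∧ a ≤ z.2) ∧ z.1 ≤ b ∧ z.2 ≤ b := hz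
  obtain ⟨⟨h21l, h21r⟩, h22l, h22r⟩ := And.intro h21 h22
  rw [D.apply_eq_fst_smul_add_snd_smul z]
  simp only [Prod.snd_add, Prod.smul_snd, smul_eq_mul]
  constructor <;> nlinarith

theorem fst_apply_zero_mk_neg (h12 : (D (0, 1)).1 < 0) (hy : 0 < y) : (D (0, y)).1 < 0 := by
  rw [D.apply_eq_fst_smul_add_snd_smul]
  simp only [Prod.fst_add, Prod.smul_fst, smul_eq_mul]
  nlinarith

theorem lt_fst_apply_mk (h11 : α < (D (1, 0)).1) (h12 : (D (0, 1)).1 ∈ Ioo (-c) 0)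
    (hαc : 2 * c + ρ < α) (hb : 0 < b) (hy : y ≤ b) : (c + ρ) * b < (D (b, y)).1 := by
  obtain ⟨h12l, h12r⟩ := h12
  rw [D.apply_eq_fst_smul_add_snd_smul]
  simp only [Prod.fst_add, Prod.smul_fst, smul_eq_mul]
  nlinarith

end PlanarJacobian

theorem rectangle_covering_lemma_general
    (f : ℝ × ℝ → ℝ × ℝ) (hf : ContDiffOn ℝ 1 f sq2) (hf0 : f 0 = 0)
    (α β ρ c : ℝ) (hβ : 0 < β)
    (hαc : 2 * c + ρ < α)
    (hd11 : ∀ z ∈ sq2, α < (fderivWithin ℝ f sq2 z (1, 0)).1)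
    (hd12 : ∀ z ∈ sq2, (fderivWithin ℝ f sq2 z (0, 1)).1 ∈ Ioo (-c) 0)
    (hd21 : ∀ z ∈ sq2, (fderivWithin ℝ f sq2 z (1, 0)).2 ∈ Ioo 0 c)
    (hd22 : ∀ z ∈ sq2, (fderivWithin ℝ f sq2 z (0, 1)).2 ∈ Ioo β ρ)
    (a b : ℝ) (ha : 0 < a) (hab : a < b) (hb : b < 1) :
    (∀ z ∈ Icc ((0 : ℝ), a) (b, b), (f z).2 ∈ Ioo (a * β) ((c + ρ) * b)) ∧
    (0 < a * β) ∧
    (∀ y ∈ Icc a b, (f (0, y)).1 < 0) ∧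
    (∀ y ∈ Icc a b, (c + ρ) * b < (f (b, y)).1) := by
  set R := Icc ((0 : ℝ), a) (b, b)
  have hdiff := hf.differentiableOn one_ne_zero
  have hR : R ⊆ sq2 :=
    Icc_subset_Icc (Prod.mk_le_mk.2 ⟨by norm_num, by linarith⟩) (Prod.mk_le_mk.2 ⟨hb.le, hb.le⟩)
  have hseg : ∀ z ∈ R, segment ℝ 0 z ⊆ sq2 := fun z hz =>
    (convex_Icc _ _).segment_subset (by simp [Prod.le_def]) (hR hz)
  refine ⟨fun z hz => ⟨?_, ?_⟩, mul_pos ha hβ, fun y hy => ?_, fun y hy => ?_⟩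
  · exact lt_apply_of_lt_apply_fderivWithin hdiff (hseg z hz) hf0 (.snd ℝ ℝ ℝ) fun w hw =>
      (snd_apply_mem_Ioo_of_mem_Icc _ ha hβ (hd21 w hw) (hd22 w hw) hz).1
  · exact apply_lt_of_apply_fderivWithin_lt hdiff (hseg z hz) hf0 (.snd ℝ ℝ ℝ) fun w hw =>
      (snd_apply_mem_Ioo_of_mem_Icc _ ha hβ (hd21 w hw) (hd22 w hw) hz).2
  · have hy0 : ((0 : ℝ), y) ∈ R := ⟨⟨le_rfl, hy.1⟩, ⟨by linarith, hy.2⟩⟩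
    exact apply_lt_of_apply_fderivWithin_lt hdiff (hseg _ hy0) hf0 (.fst ℝ ℝ ℝ) fun w hw =>
      fst_apply_zero_mk_neg _ (hd12 w hw).2 (ha.trans_le hy.1)
  · have hyb : (b, y) ∈ R := ⟨⟨by linarith, hy.1⟩, ⟨le_rfl, hy.2⟩⟩
    exact lt_apply_of_lt_apply_fderivWithin hdiff (hseg _ hyb) hf0 (.fst ℝ ℝ ℝ) fun w hw =>
      lt_fst_apply_mk _ (hd11 w hw) (hd12 w hw) hαc (ha.trans hab) hy.2

/-- covering relations near a planar hyperbolic fixed point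
(rectangle lemma). Under the derivative bounds, for `0 < a < b < 1` and
`a' = aβ`, `b' = (c+ρ)b`, the rectangle `R_{a,b} = [0,b]×[a,b]` `f`-covers
`R_{a',b'}` and `Q_{a',b'}`: (i) `π₂ f(R_{a,b}) ⊂ (a', b')`,
(ii) `π₁ f({0}×[a,b]) < 0 < a'`, (iii) `π₁ f({b}×[a,b]) > b'`. -/
theorem rectangle_covering_lemma
    (f : ℝ × ℝ → ℝ × ℝ) (hf : ContDiffOn ℝ 1 f sq2) (hf0 : f 0 = 0)
    (α β ρ c : ℝ) (hα : 0 < α) (hβ : 0 < β) (hρ : 0 < ρ) (hc : 0 < c)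
    (hρβ : β < ρ) (hαc : 2 * c + ρ < α)
    (hd11 : ∀ z ∈ sq2, α < (fderivWithin ℝ f sq2 z (1, 0)).1)
    (hd12 : ∀ z ∈ sq2, (fderivWithin ℝ f sq2 z (0, 1)).1 ∈ Ioo (-c) 0)
    (hd21 : ∀ z ∈ sq2, (fderivWithin ℝ f sq2 z (1, 0)).2 ∈ Ioo 0 c)
    (hd22 : ∀ z ∈ sq2, (fderivWithin ℝ f sq2 z (0, 1)).2 ∈ Ioo β ρ)
    (a b : ℝ) (ha : 0 < a) (hab : a < b) (hb : b < 1) :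
    (∀ z ∈ Icc ((0 : ℝ), a) (b, b), (f z).2 ∈ Ioo (a * β) ((c + ρ) * b)) ∧
    (0 < a * β) ∧
    (∀ y ∈ Icc a b, (f (0, y)).1 < 0) ∧
    (∀ y ∈ Icc a b, (c + ρ) * b < (f (b, y)).1) :=
  rectangle_covering_lemma_general f hf hf0 α β ρ c hβ hαc hd11 hd12 hd21 hd22 a b ha hab hb
end

section
/- Iterated approach to the fixed point: under the hypotheses of the rectangle covering lemma (f C^1 on [-1,1]^2, f(0)=0, derivative bounds ∂f_1/∂z_1 > α, ∂f_1/∂z_2 ∈ (-c,0), ∂f_2/∂z_1 ∈ (0,c), ∂f_2/∂z_2 ∈ (β,ρ), with α > 2c+ρ and additionally c + ρ < 1), for fixed 0 < a < b < 1 define a_k = β^k a and b_k = (c+ρ)^k b for k ∈ ℕ. Then 0 < a_k < b_k < 1 for all k, the covering conditions hold for every k ((i) π_2 f([0,b_k]×[a_k,b_k]) ⊂ (a_{k+1}, b_{k+1}), (ii) π_1 f({0}×[a_k,b_k]) < 0, (iii) π_1 f({b_k}×[a_k,b_k]) > b_{k+1}), and b_k → 0 as k → ∞, so the rectangles accumulate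 at the fixed point 0 while all remaining in the closed first quadrant minus the origin. -/
/-! By the mean value theorem along the vertical segment from `0` to `(0, y)` and the horizontal
segment from `(0, y)` to `(x, y)`, each component of `f (x, y)` is `p x + q y` with partial
derivatives `p, q` of `f` taken somewhere in the square. The derivative bounds then control the
image of the rectangle `[0,b] × [a,b]`: its second coordinate lies strictly between `β a` and
`(c + ρ) b`, the left edge is sent to negative first coordinates because `∂f₁/∂z₂ < 0`, and the
right edge beyond `(α - c) b > (c + ρ) b`. Since `0 < β ≤ c + ρ < 1`, the numbers `β^k a` and
`(c + ρ)^k b` again satisfy `0 < a_k < b_k < 1`, so this applies at every step, and `b_k → 0`. -/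

open Set Filter

theorem Convex.exists_clm_apply_sub_eq_fderivWithin
    {E F : Type*} [NormedAddCommGroup E] [NormedSpace ℝ E]
    [NormedAddCommGroup F] [NormedSpace ℝ F]
    {f : E → F} {s : Set E} (hs : Convex ℝ s) (hf : DifferentiableOn ℝ f s)
    (π : F →L[ℝ] ℝ) {x y : E} (hx : x ∈ s) (hy : y ∈ s) :
    ∃ z ∈ s, π (f y) - π (f x) = π (fderivWithin ℝ f s z (y - x)) := by
  obtain ⟨z, hz, h⟩ := domain_mvt
    (f' := fun z => π.comp (fderivWithin ℝ f s z))
    (fun z hz => π.hasFDerivAt.comp_hasFDerivWithinAt z (hf z hz).hasFDerivWithinAt)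
    hs hx hy
  exact ⟨z, hs.segment_subset hx hy hz, h⟩

theorem mk_mem_sq2 {x y : ℝ} : (x, y) ∈ sq2 ↔ x ∈ Icc (-1) 1 ∧ y ∈ Icc (-1) 1 := by
  simp only [sq2, mem_Icc, Prod.mk_le_mk]
  tauto

theorem exists_clm_apply_eq_partials {f : ℝ × ℝ → ℝ × ℝ} (hf : DifferentiableOn ℝ f sq2)
    (hf0 : f 0 = 0) (π : ℝ × ℝ →L[ℝ] ℝ) {x y : ℝ} (hx : x ∈ Icc (-1) 1)
    (hy : y ∈ Icc (-1) 1) :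
    ∃ w ∈ sq2, ∃ z ∈ sq2, π (f (x, y)) =
      π (fderivWithin ℝ f sq2 w (1, 0)) * x + π (fderivWithin ℝ f sq2 z (0, 1)) * y := by
  have h0 : (0 : ℝ) ∈ Icc (-1) 1 := by norm_num
  have hconv : Convex ℝ sq2 := convex_Icc _ _
  obtain ⟨z, hz, hvert⟩ := hconv.exists_clm_apply_sub_eq_fderivWithin hf π
    (mk_mem_sq2.2 ⟨h0, h0⟩) (mk_mem_sq2.2 ⟨h0, hy⟩)
  obtain ⟨w, hw, hhor⟩ := hconv.exists_clm_apply_sub_eq_fderivWithin hf π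
    (mk_mem_sq2.2 ⟨h0, hy⟩) (mk_mem_sq2.2 ⟨hx, hy⟩)
  have hv : ((0 : ℝ), y) - (0, 0) = y • ((0 : ℝ), (1 : ℝ)) := by simp
  have hh : (x, y) - ((0 : ℝ), y) = x • ((1 : ℝ), (0 : ℝ)) := by simp
  rw [hv, map_smul, map_smul, smul_eq_mul] at hvert
  rw [hh, map_smul, map_smul, smul_eq_mul] at hhor
  rw [show f (0, 0) = 0 from hf0, map_zero] at hvert
  exact ⟨w, hw, z, hz, by linarith⟩

theorem rectangle_covering {f : ℝ × ℝ → ℝ × ℝ} (hf : DifferentiableOn ℝ f sq2)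
    (hf0 : f 0 = 0) {α β ρ c : ℝ} (hβ : 0 ≤ β) (hαc : 2 * c + ρ < α)
    (hd11 : ∀ z ∈ sq2, α < (fderivWithin ℝ f sq2 z (1, 0)).1)
    (hd12 : ∀ z ∈ sq2, (fderivWithin ℝ f sq2 z (0, 1)).1 ∈ Ioo (-c) 0)
    (hd21 : ∀ z ∈ sq2, (fderivWithin ℝ f sq2 z (1, 0)).2 ∈ Ioo 0 c)
    (hd22 : ∀ z ∈ sq2, (fderivWithin ℝ f sq2 z (0, 1)).2 ∈ Ioo β ρ)
    {a b : ℝ} (ha : 0 < a) (hab : a < b) (hb : b < 1) :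
    (∀ z ∈ Icc ((0 : ℝ), a) (b, b), (f z).2 ∈ Ioo (β * a) ((c + ρ) * b)) ∧
    (∀ y ∈ Icc a b, (f (0, y)).1 < 0) ∧
    (∀ y ∈ Icc a b, (c + ρ) * b < (f (b, y)).1) := by
  have hunit : ∀ t ∈ Icc 0 b, t ∈ Icc (-1 : ℝ) 1 := fun t ht =>
    ⟨by linarith [ht.1], by linarith [ht.2]⟩
  have hy_unit : ∀ y ∈ Icc a b, y ∈ Icc (-1 : ℝ) 1 := fun y hy =>
    hunit y ⟨by linarith [hy.1], hy.2⟩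
  refine ⟨?_, fun y hy => ?_, fun y hy => ?_⟩
  · rintro ⟨x, y⟩ ⟨⟨hx0, hay⟩, ⟨hxb, hyb⟩⟩
    obtain ⟨w, hw, z, hz, hfxy⟩ := exists_clm_apply_eq_partials hf hf0
      (ContinuousLinearMap.snd ℝ ℝ ℝ) (hunit x ⟨hx0, hxb⟩) (hy_unit y ⟨hay, hyb⟩)
    simp only [ContinuousLinearMap.coe_snd'] at hfxy
    obtain ⟨hp0, hpc⟩ := hd21 w hw
    obtain ⟨hqβ, hqρ⟩ := hd22 z hz
    rw [hfxy]
    constructor <;> nlinarith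
  · obtain ⟨w, hw, z, hz, hfy⟩ := exists_clm_apply_eq_partials hf hf0
      (ContinuousLinearMap.fst ℝ ℝ ℝ) (hunit 0 ⟨le_rfl, by linarith⟩) (hy_unit y hy)
    simp only [ContinuousLinearMap.coe_fst'] at hfy
    obtain ⟨-, hq0⟩ := hd12 z hz
    rw [hfy]
    nlinarith [hy.1]
  · obtain ⟨w, hw, z, hz, hfby⟩ := exists_clm_apply_eq_partials hf hf0
      (ContinuousLinearMap.fst ℝ ℝ ℝ) (hunit b ⟨by linarith, le_rfl⟩) (hy_unit y hy)
    simp only [ContinuousLinearMap.coe_fst'] at hfby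
    have hpα := hd11 w hw
    obtain ⟨hqc, hq0⟩ := hd12 z hz
    rw [hfby]
    nlinarith [hy.1, hy.2]

theorem geometric_rectangle_bounds {β γ a b : ℝ} (hβ : 0 < β) (hβγ : β ≤ γ) (hγ : γ ≤ 1)
    (ha : 0 < a) (hab : a < b) (hb : b < 1) (k : ℕ) :
    0 < β ^ k * a ∧ β ^ k * a < γ ^ k * b ∧ γ ^ k * b < 1 := by
  have hγ0 : 0 < γ := hβ.trans_le hβγ
  have hγk : γ ^ k ≤ 1 := pow_le_one₀ hγ0.le hγ
  refine ⟨by positivity, ?_, ?_⟩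
  · calc β ^ k * a ≤ γ ^ k * a := by gcongr
      _ < γ ^ k * b := by gcongr
  · calc γ ^ k * b ≤ 1 * b := by gcongr; linarith
      _ < 1 := by linarith

theorem iterated_rectangle_covering_general
    (f : ℝ × ℝ → ℝ × ℝ) (hf : ContDiffOn ℝ 1 f sq2) (hf0 : f 0 = 0)
    (α β ρ c : ℝ) (hβ : 0 < β) (hc : 0 < c)
    (hρβ : β < ρ) (hαc : 2 * c + ρ < α) (hcρ : c + ρ < 1)
    (hd11 : ∀ z ∈ sq2, α < (fderivWithin ℝ f sq2 z (1, 0)).1)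
    (hd12 : ∀ z ∈ sq2, (fderivWithin ℝ f sq2 z (0, 1)).1 ∈ Ioo (-c) 0)
    (hd21 : ∀ z ∈ sq2, (fderivWithin ℝ f sq2 z (1, 0)).2 ∈ Ioo 0 c)
    (hd22 : ∀ z ∈ sq2, (fderivWithin ℝ f sq2 z (0, 1)).2 ∈ Ioo β ρ)
    (a b : ℝ) (ha : 0 < a) (hab : a < b) (hb : b < 1) :
    (∀ k : ℕ, 0 < β ^ k * a ∧ β ^ k * a < (c + ρ) ^ k * b ∧ (c + ρ) ^ k * b < 1) ∧
    (∀ k : ℕ,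
      (∀ z ∈ Icc ((0 : ℝ), β ^ k * a) ((c + ρ) ^ k * b, (c + ρ) ^ k * b),
        (f z).2 ∈ Ioo (β ^ (k + 1) * a) ((c + ρ) ^ (k + 1) * b)) ∧
      (∀ y ∈ Icc (β ^ k * a) ((c + ρ) ^ k * b), (f (0, y)).1 < 0) ∧
      (∀ y ∈ Icc (β ^ k * a) ((c + ρ) ^ k * b),
        (c + ρ) ^ (k + 1) * b < (f ((c + ρ) ^ k * b, y)).1)) ∧
    Tendsto (fun k : ℕ => (c + ρ) ^ k * b) atTop (nhds 0) := by
  have hbounds := geometric_rectangle_bounds hβ (by linarith : β ≤ c + ρ) hcρ.le ha hab hb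
  refine ⟨hbounds, fun k => ?_, ?_⟩
  · obtain ⟨hak, hakbk, hbk⟩ := hbounds k
    simp only [pow_succ', mul_assoc]
    exact rectangle_covering (hf.differentiableOn one_ne_zero) hf0 hβ.le hαc
      hd11 hd12 hd21 hd22 hak hakbk hbk
  · simpa using (tendsto_pow_atTop_nhds_zero_of_lt_one (by linarith) hcρ).mul_const b

/-- iterated approach to the fixed point. Under the hypotheses of the
rectangle covering lemma together with `c + ρ < 1`, setting `a_k = β^k a` and
`b_k = (c+ρ)^k b`, one has `0 < a_k < b_k < 1` for all `k`, the covering conditions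
hold for every `k`, and `b_k → 0`, so the rectangles `[0,b_k]×[a_k,b_k]`
accumulate at the fixed point `0` while remaining in the closed first quadrant
minus the origin. -/
theorem iterated_rectangle_covering
    (f : ℝ × ℝ → ℝ × ℝ) (hf : ContDiffOn ℝ 1 f sq2) (hf0 : f 0 = 0)
    (α β ρ c : ℝ) (hα : 0 < α) (hβ : 0 < β) (hρ : 0 < ρ) (hc : 0 < c)
    (hρβ : β < ρ) (hαc : 2 * c + ρ < α) (hcρ : c + ρ < 1)
    (hd11 : ∀ z ∈ sq2, α < (fderivWithin ℝ f sq2 z (1, 0)).1)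
    (hd12 : ∀ z ∈ sq2, (fderivWithin ℝ f sq2 z (0, 1)).1 ∈ Ioo (-c) 0)
    (hd21 : ∀ z ∈ sq2, (fderivWithin ℝ f sq2 z (1, 0)).2 ∈ Ioo 0 c)
    (hd22 : ∀ z ∈ sq2, (fderivWithin ℝ f sq2 z (0, 1)).2 ∈ Ioo β ρ)
    (a b : ℝ) (ha : 0 < a) (hab : a < b) (hb : b < 1) :
    (∀ k : ℕ, 0 < β ^ k * a ∧ β ^ k * a < (c + ρ) ^ k * b ∧ (c + ρ) ^ k * b < 1) ∧
    (∀ k : ℕ,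
      (∀ z ∈ Icc ((0 : ℝ), β ^ k * a) ((c + ρ) ^ k * b, (c + ρ) ^ k * b),
        (f z).2 ∈ Ioo (β ^ (k + 1) * a) ((c + ρ) ^ (k + 1) * b)) ∧
      (∀ y ∈ Icc (β ^ k * a) ((c + ρ) ^ k * b), (f (0, y)).1 < 0) ∧
      (∀ y ∈ Icc (β ^ k * a) ((c + ρ) ^ k * b),
        (c + ρ) ^ (k + 1) * b < (f ((c + ρ) ^ k * b, y)).1)) ∧
    Tendsto (fun k : ℕ => (c + ρ) ^ k * b) atTop (nhds 0) :=
  iterated_rectangle_covering_general f hf hf0 α β ρ c hβ hc hρβ hαc hcρ hd11 hd12 hd21 hd22 a b ha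
    hab hb
end
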